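/- With the notation of the gluing construction — α > 0, s_α² = α/(2+α), ã_α(x) = s_α^{−α−2}(1−s_α²)(α+2)|x|^α on B_{s_α} extended constantly to B_1 — there exists a constant C independent of α such that ∫_{B_1} |x|² |∇ã_α|² dx ≤ C for all 0 < α ≤ 1. -/

import Mathlib

open MeasureTheory Real Set Filter

noncomputable section

abbrev E2 := EuclideanSpace ℝ (Fin 2)

/-- i-th weak (pointwise) partial derivative -/
noncomputable def pd (f : E2 → ℝ) (i : Fin 2) (x : E2) : ℝ :=
  fderiv ℝ f x (EuclideanSpace.single i 1)

/-- squared norm of the gradient -/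
noncomputable def gradSq (f : E2 → ℝ) (x : E2) : ℝ :=
  (pd f 0 x) ^ 2 + (pd f 1 x) ^ 2

/-- the Jacobian ∇a · ∇⊥b with ∇⊥b = (−∂₂ b, ∂₁ b) -/
noncomputable def jac (a b : E2 → ℝ) (x : E2) : ℝ :=
  pd a 0 x * (-(pd b 1 x)) + pd a 1 x * (pd b 0 x)

/-- the open unit disk -/
def B1 : Set E2 := Metric.ball 0 1

/-- f ∈ W^{1,2}(B₁): f and its gradient are square integrable on B₁ -/
def MemW12 (f : E2 → ℝ) : Prop :=
  MeasureTheory.IntegrableOn (fun x => (f x) ^ 2) B1 ∧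
  MeasureTheory.IntegrableOn (gradSq f) B1

/-- φ is the weak solution of Δφ = ∇a·∇⊥b on B₁ with zero Dirichlet boundary data -/
def IsWeakSol (φ a b : E2 → ℝ) : Prop :=
  (∀ x ∈ Metric.sphere (0 : E2) 1, φ x = 0) ∧
  ∀ ψ : E2 → ℝ, ContDiff ℝ (⊤ : ℕ∞) ψ → HasCompactSupport ψ → tsupport ψ ⊆ B1 →
    ∫ x in B1, (pd φ 0 x * pd ψ 0 x + pd φ 1 x * pd ψ 1 x) =
      - ∫ x in B1, jac a b x * ψ x

/- ------------- auxiliary lemmas ------------- -/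

lemma normsq_eq_coords (x : E2) : (x 0)^2 + (x 1)^2 = ‖x‖^2 := by
  have h : ‖x‖^2 = ∑ i, ‖x i‖^2 := by
    rw [EuclideanSpace.norm_eq, Real.sq_sqrt (by positivity)]
  simp only [Fin.sum_univ_two, Real.norm_eq_abs, sq_abs] at h
  linarith

lemma pd_inner (c a s : ℝ) (x : E2) (hx : x ≠ 0) (hxs : ‖x‖ < s) (i : Fin 2) :
    pd (fun y : E2 => if ‖y‖ ≤ s then c * ‖y‖ ^ a else c * s ^ a) i x
      = c * a * ((‖x‖^2 : ℝ)) ^ (a/2 - 1) * x i := by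
  have hT : (‖x‖^2 : ℝ) ≠ 0 := by
    have : ‖x‖ ≠ 0 := norm_ne_zero_iff.mpr hx
    positivity
  have hev : (fun y : E2 => if ‖y‖ ≤ s then c * ‖y‖ ^ a else c * s ^ a)
      =ᶠ[nhds x] (fun y : E2 => c * ((‖y‖^2 : ℝ)) ^ (a/2)) := by
    filter_upwards [Metric.isOpen_ball.mem_nhds (show x ∈ Metric.ball (0:E2) s by
      simpa [mem_ball_zero_iff] using hxs)] with y hy
    rw [mem_ball_zero_iff] at hy
    rw [if_pos hy.le]
    congr 1
    rw [← Real.rpow_natCast ‖y‖ 2, ← Real.rpow_mul (norm_nonneg y)]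
    push_cast
    rw [show (2:ℝ) * (a/2) = a by ring]
  have hd : HasFDerivAt (fun y : E2 => c * ((‖y‖^2 : ℝ)) ^ (a/2))
      (c • ((a/2 * (‖x‖^2 : ℝ) ^ (a/2-1)) • (2 • innerSL ℝ x))) x :=
    (((hasStrictFDerivAt_norm_sq x).hasFDerivAt).rpow_const (Or.inl hT)).const_mul c
  have hin : (innerSL ℝ x) (EuclideanSpace.single i (1:ℝ)) = x i := by
    rw [innerSL_apply_apply, EuclideanSpace.inner_single_right]; simp
  rw [pd, hev.fderiv_eq, hd.fderiv]
  rw [ContinuousLinearMap.smul_apply, ContinuousLinearMap.smul_apply,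
    ContinuousLinearMap.smul_apply, hin]
  simp only [smul_eq_mul, nsmul_eq_mul, Nat.cast_ofNat]
  ring

lemma alg_bound (a : ℝ) (ha0 : 0 < a) (ha1 : a ≤ 1) {s K : ℝ}
    (hs : s = Real.sqrt (a / (2 + a))) (hK : K = s ^ (-a - 2) * (1 - s ^ 2)) :
    (K * (a + 2)) ^ 2 * a ^ 2 * ((s^2 : ℝ)) ^ a ≤ 36 := by
  have h2a : (0:ℝ) < 2 + a := by linarith
  have ht : (0:ℝ) < a / (2 + a) := by positivity
  have hspos : 0 < s := hs ▸ Real.sqrt_pos.mpr ht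
  have hs2 : s ^ 2 = a / (2 + a) := by rw [hs]; exact Real.sq_sqrt ht.le
  have hA : s ^ (-a - 2) * s ^ (-a - 2) * ((s^2 : ℝ)) ^ a = ((a / (2+a))^2)⁻¹ := by
    rw [← Real.rpow_natCast s 2, ← Real.rpow_mul hspos.le, ← Real.rpow_add hspos,
      ← Real.rpow_add hspos]
    push_cast
    rw [show (-a - 2) + (-a - 2) + (2:ℝ) * a = -(2*2) by ring, Real.rpow_neg hspos.le,
      show ((2:ℝ)*2) = (((4:ℕ)):ℝ) by norm_num, Real.rpow_natCast]
    rw [show s ^ (4:ℕ) = (s^2)^2 by ring, hs2]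
  have key : (K * (a + 2)) ^ 2 * a ^ 2 * ((s^2 : ℝ)) ^ a
      = (s ^ (-a - 2) * s ^ (-a - 2) * ((s^2 : ℝ)) ^ a) * ((1 - s^2)^2 * (a+2)^2 * a^2) := by
    rw [hK]; ring
  rw [key, hA, hs2]
  have hfin : ((a / (2+a))^2)⁻¹ * ((1 - a/(2+a))^2 * (a+2)^2 * a^2) = 4 * (a+2)^2 := by
    field_simp
    ring
  rw [hfin]
  nlinarith

/-- The |x|²-weighted Dirichlet energy of ã_α stays bounded uniformly in α ∈ (0,1]. -/
theorem stmt14 :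
    ∃ C : ℝ, 0 < C ∧
      ∀ α : ℝ, 0 < α → α ≤ 1 →
      ∀ sα K : ℝ, sα = Real.sqrt (α / (2 + α)) → K = sα ^ (-α - 2) * (1 - sα ^ 2) →
        ∫ x in B1, ‖x‖ ^ 2 * gradSq (fun y : E2 =>
            if ‖y‖ ≤ sα then K * (α + 2) * ‖y‖ ^ α else K * (α + 2) * sα ^ α) x ≤ C := by
  refine ⟨36 * ((volume : Measure E2) B1).toReal + 1, ?_, ?_⟩
  · have := ENNReal.toReal_nonneg (a := (volume : Measure E2) B1)
    linarith
  intro α hα0 hα1 s K hsdef hKdef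
  set f := fun y : E2 => if ‖y‖ ≤ s then K * (α + 2) * ‖y‖ ^ α else K * (α + 2) * s ^ α with hf
  have hmeas : AEStronglyMeasurable (fun x : E2 => ‖x‖ ^ 2 * gradSq f x)
      ((volume : Measure E2).restrict B1) := by
    apply Measurable.aestronglyMeasurable
    apply Measurable.mul
    · exact (continuous_norm.pow 2).measurable
    · unfold gradSq pd
      exact ((measurable_fderiv_apply_const ℝ f _).pow_const 2).add
        ((measurable_fderiv_apply_const ℝ f _).pow_const 2)
  have hb : ∀ᵐ x ∂(volume : Measure E2), x ∈ B1 → ‖‖x‖ ^ 2 * gradSq f x‖ ≤ 36 := by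
    have hsph : ∀ᵐ x ∂(volume : Measure E2), x ∉ Metric.sphere (0:E2) s :=
      measure_eq_zero_iff_ae_notMem.mp (Measure.addHaar_sphere (μ := volume) 0 s)
    filter_upwards [hsph] with x hxsph _
    rcases lt_trichotomy ‖x‖ s with hlt | heq | hgt
    · by_cases hx0 : x = 0
      · subst hx0
        simp only [norm_zero, ne_eq, OfNat.ofNat_ne_zero, not_false_eq_true, zero_pow, zero_mul]
        norm_num
      · have hpd : ∀ i, pd f i x = K * (α + 2) * α * ((‖x‖^2 : ℝ)) ^ (α/2 - 1) * x i :=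
          fun i => pd_inner (K * (α + 2)) α s x hx0 hlt i
        have hxsum := normsq_eq_coords x
        have hTpos : (0:ℝ) < ‖x‖^2 := by
          have : ‖x‖ ≠ 0 := norm_ne_zero_iff.mpr hx0
          positivity
        have hval : ‖x‖ ^ 2 * gradSq f x
            = (K * (α + 2))^2 * α^2 * (((‖x‖^2 : ℝ)) ^ (α/2 - 1))^2 * (‖x‖^2)^2 := by
          rw [gradSq, hpd 0, hpd 1]
          rw [show (K * (α + 2) * α * ((‖x‖^2 : ℝ)) ^ (α/2 - 1) * x 0)^2
              + (K * (α + 2) * α * ((‖x‖^2 : ℝ)) ^ (α/2 - 1) * x 1)^2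
              = (K * (α + 2))^2 * α^2 * (((‖x‖^2 : ℝ)) ^ (α/2 - 1))^2 * ((x 0)^2 + (x 1)^2)
              by ring, hxsum]
          ring
        have hpow : (((‖x‖^2 : ℝ)) ^ (α/2 - 1))^2 * (‖x‖^2)^2 = ((‖x‖^2 : ℝ)) ^ α := by
          rw [← Real.rpow_natCast (((‖x‖^2 : ℝ)) ^ (α/2 - 1)) 2, ← Real.rpow_mul hTpos.le,
            ← Real.rpow_natCast ((‖x‖^2 : ℝ)) 2, ← Real.rpow_add hTpos]
          push_cast
          rw [show (α/2 - 1) * 2 + (2:ℝ) = α by ring]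
        have hT_le : (‖x‖^2 : ℝ) ≤ s^2 := by
          have := norm_nonneg x
          nlinarith
        have hle : ‖x‖ ^ 2 * gradSq f x ≤ 36 := by
          rw [hval, show (K * (α + 2))^2 * α^2 * (((‖x‖^2 : ℝ)) ^ (α/2 - 1))^2 * (‖x‖^2)^2
            = (K * (α + 2))^2 * α^2 * ((((‖x‖^2 : ℝ)) ^ (α/2 - 1))^2 * (‖x‖^2)^2) by ring,
            hpow]
          calc (K * (α + 2))^2 * α^2 * ((‖x‖^2 : ℝ)) ^ α
              ≤ (K * (α + 2))^2 * α^2 * ((s^2 : ℝ)) ^ α := by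
                apply mul_le_mul_of_nonneg_left _ (by positivity)
                exact Real.rpow_le_rpow hTpos.le hT_le hα0.le
            _ ≤ 36 := alg_bound α hα0 hα1 hsdef hKdef
        have hge : 0 ≤ ‖x‖ ^ 2 * gradSq f x := by
          rw [gradSq]; positivity
        rw [Real.norm_eq_abs, abs_of_nonneg hge]
        exact hle
    · exact absurd (mem_sphere_zero_iff_norm.mpr heq) hxsph
    · have hev : f =ᶠ[nhds x] fun _ => K * (α + 2) * s ^ α := by
        filter_upwards [(isOpen_Ioi.preimage continuous_norm).mem_nhds
          (show ‖x‖ ∈ Ioi s from hgt)] with y hy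
        exact if_neg (not_le.mpr hy)
      have hpd : ∀ i : Fin 2, pd f i x = 0 := by
        intro i
        rw [pd, hev.fderiv_eq, fderiv_fun_const]
        simp
      rw [gradSq, hpd 0, hpd 1]
      norm_num
  have hball : (volume : Measure E2) B1 < ⊤ := by
    rw [B1]; exact measure_ball_lt_top
  calc ∫ x in B1, ‖x‖ ^ 2 * gradSq f x
      ≤ ‖∫ x in B1, ‖x‖ ^ 2 * gradSq f x‖ := by rw [Real.norm_eq_abs]; exact le_abs_self _
    _ ≤ 36 * ((volume : Measure E2) B1).toReal :=
        norm_setIntegral_le_of_norm_le_const_ae' hball hb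
    _ ≤ 36 * ((volume : Measure E2) B1).toReal + 1 := by linarith

end
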